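/- Let T = ℝ^{2n} (n ≥ 2, n ≠ 3) with F = e^{12}+⋯+e^{2n-1,2n} and Ω = Ω⁺+iΩ⁻ = (e^1+ie^2)⋯(e^{2n-1}+ie^{2n}). If f is a degree-1 linear map on the span of {1, F, Ω⁺, Ω⁻, and their products} satisfying the graded Leibniz rule and f² = 0, and mapping invariant p-forms to invariant (p+1)-forms, then f = 0. -/

import Mathlib

/-!
STATEMENT 2: Let T = ℝ^{2n} (n ≥ 2, n ≠ 3) with F = e^{12}+⋯+e^{2n-1,2n} and
Ω = Ω⁺+iΩ⁻ = (e^1+ie^2)⋯(e^{2n-1}+ie^{2n}).  Any differential operator f (degree-1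
linear map, satisfying the graded Leibniz rule, with f² = 0, preserving the
subalgebra generated by F, Ω⁺, Ω⁻ and raising degree by one) vanishes on that
subalgebra.
-/

noncomputable section
open ExteriorAlgebra

abbrev Λm (m : ℕ) : Type := ExteriorAlgebra ℝ (Fin m → ℝ)

def e (m : ℕ) (i : Fin m) : Λm m := ι ℝ (Pi.single i 1)

/-- the degree-p part of Λ*(ℝ^m), as a submodule -/
def Gp (m p : ℕ) : Submodule ℝ (Λm m) :=
  (LinearMap.range (ι ℝ : (Fin m → ℝ) →ₗ[ℝ] Λm m)) ^ p

/-- F = e^{12}+⋯+e^{2n-1,2n} -/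
def F (n : ℕ) : Λm (2 * n) :=
  ∑ i : Fin n, e (2 * n) ⟨2 * i.1, by have := i.2; omega⟩ *
    e (2 * n) ⟨2 * i.1 + 1, by have := i.2; omega⟩

/-- the monomial of Ω = ∏ᵢ (e^{2i-1} + i e^{2i}) indexed by the set S of slots where
the imaginary factor is chosen -/
def ΩTerm (n : ℕ) (S : Finset (Fin n)) : Λm (2 * n) :=
  (List.ofFn fun i : Fin n =>
    if i ∈ S then e (2 * n) ⟨2 * i.1 + 1, by have := i.2; omega⟩
    else e (2 * n) ⟨2 * i.1, by have := i.2; omega⟩).prod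

/-- Ω⁺ = Re Ω -/
def Ωp (n : ℕ) : Λm (2 * n) :=
  ∑ S : Finset (Fin n), (Complex.I ^ S.card).re • ΩTerm n S

/-- Ω⁻ = Im Ω -/
def Ωm (n : ℕ) : Λm (2 * n) :=
  ∑ S : Finset (Fin n), (Complex.I ^ S.card).im • ΩTerm n S

namespace Stmt2Aux

variable {n : ℕ}

/-- index of the first vector in the i-th pair -/
def ia (n : ℕ) (i : Fin n) : Fin (2 * n) := ⟨2 * i.1, by have := i.2; omega⟩
/-- index of the second vector in the i-th pair -/
def ib (n : ℕ) (i : Fin n) : Fin (2 * n) := ⟨2 * i.1 + 1, by have := i.2; omega⟩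

def sa (n : ℕ) (i : Fin n) : Fin (2 * n) → ℝ := Pi.single (ia n i) 1
def sb (n : ℕ) (i : Fin n) : Fin (2 * n) → ℝ := Pi.single (ib n i) 1

def w (n : ℕ) (i : Fin n) : Λm (2 * n) := e (2 * n) (ia n i) * e (2 * n) (ib n i)

lemma F_eq (n : ℕ) : F n = ∑ i : Fin n, w n i := rfl

lemma ι_swap {m : ℕ} (x y : Fin m → ℝ) :
    ι ℝ x * ι ℝ y = -(ι ℝ y * ι ℝ x) :=
  eq_neg_of_add_eq_zero_left (by rw [add_comm]; exact ι_add_mul_swap (R := ℝ) y x)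

lemma pair_mul_ι {m : ℕ} (x y z : Fin m → ℝ) :
    (ι ℝ x * ι ℝ y) * ι ℝ z = ι ℝ z * (ι ℝ x * ι ℝ y) := by
  rw [mul_assoc, ι_swap y z, mul_neg, ← mul_assoc, ι_swap x z, neg_mul, neg_neg, mul_assoc]

lemma w_comm (i j : Fin n) : Commute (w n i) (w n j) :=
  Commute.mul_right (pair_mul_ι _ _ _) (pair_mul_ι _ _ _)

lemma w_sq (i : Fin n) : w n i * w n i = 0 := by
  show (ι ℝ (sa n i) * ι ℝ (sb n i)) * (ι ℝ (sa n i) * ι ℝ (sb n i)) = 0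
  rw [← mul_assoc, pair_mul_ι, ← mul_assoc, ι_sq_zero, zero_mul, zero_mul]

/-- binomial for `y` of square zero -/
lemma add_pow_sq_zero {A : Type*} [Ring A] {x y : A} (h : Commute x y) (hy : y * y = 0) :
    ∀ m : ℕ, (x + y) ^ (m + 1) = x ^ (m + 1) + (m + 1) • (x ^ m * y)
  | 0 => by simp
  | m + 1 => by
    rw [pow_succ, add_pow_sq_zero h hy m, add_mul, mul_add, mul_add, ← pow_succ,
      smul_mul_assoc, smul_mul_assoc, mul_assoc, mul_assoc, ← h.eq, hy, mul_zero, smul_zero,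
      add_zero, ← mul_assoc, ← pow_succ, succ_nsmul (x ^ (m + 1) * y) (m + 1), ← add_assoc]
    abel


section Contraction

/-- left contraction, borrowed from the Clifford algebra -/
def C (d : Module.Dual ℝ (Fin (2 * n) → ℝ)) : Λm (2 * n) →ₗ[ℝ] Λm (2 * n) :=
  CliffordAlgebra.contractLeft d

lemma C_ι_mul (d : Module.Dual ℝ (Fin (2 * n) → ℝ)) (x : Fin (2 * n) → ℝ) (y : Λm (2 * n)) :
    C d (ι ℝ x * y) = d x • y - ι ℝ x * C d y :=
  CliffordAlgebra.contractLeft_ι_mul (Q := (0 : QuadraticForm ℝ (Fin (2 * n) → ℝ))) d x y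

lemma C_one (d : Module.Dual ℝ (Fin (2 * n) → ℝ)) : C d (1 : Λm (2 * n)) = 0 :=
  CliffordAlgebra.contractLeft_one (0 : QuadraticForm ℝ (Fin (2 * n) → ℝ)) d

lemma C_w_mul (d : Module.Dual ℝ (Fin (2 * n) → ℝ)) (i : Fin n) (y : Λm (2 * n)) :
    C d (w n i * y) =
      d (sa n i) • (ι ℝ (sb n i) * y) - d (sb n i) • (ι ℝ (sa n i) * y) + w n i * C d y := by
  have hw : w n i = ι ℝ (sa n i) * ι ℝ (sb n i) := rfl
  rw [hw, mul_assoc, C_ι_mul, C_ι_mul, mul_sub, mul_smul_comm, ← mul_assoc]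
  abel

lemma C_Fs_pow (d : Module.Dual ℝ (Fin (2 * n) → ℝ)) (s : Finset (Fin n))
    (hd : ∀ j ∈ s, d (sa n j) = 0 ∧ d (sb n j) = 0) :
    ∀ m : ℕ, C d ((∑ i ∈ s, w n i) ^ m) = 0
  | 0 => by rw [pow_zero]; exact C_one d
  | m + 1 => by
    rw [pow_succ', Finset.sum_mul, map_sum]
    refine Finset.sum_eq_zero fun j hj => ?_
    rw [C_w_mul, (hd j hj).1, (hd j hj).2, C_Fs_pow d s hd m]
    simp

lemma sa_apply (i : Fin n) (t : Fin (2 * n)) : sa n i t = if t = ia n i then 1 else 0 :=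
  Pi.single_apply _ _ _

lemma sb_apply (i : Fin n) (t : Fin (2 * n)) : sb n i t = if t = ib n i then 1 else 0 :=
  Pi.single_apply _ _ _

lemma Fs_pow_ne_zero : ∀ (k : ℕ) (s : Finset (Fin n)), k ≤ s.card →
    (∑ i ∈ s, w n i) ^ k ≠ 0
  | 0, s, _ => by rw [pow_zero]; exact one_ne_zero
  | k + 1, s, hk => by
    intro h
    obtain ⟨i, hi⟩ : s.Nonempty := Finset.card_pos.mp (by omega)
    set s' := s.erase i with hs'
    have hcard : k ≤ s'.card := by
      rw [hs', Finset.card_erase_of_mem hi]; omega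
    have hsum : (∑ j ∈ s, w n j) = (∑ j ∈ s', w n j) + w n i := by
      rw [hs', Finset.sum_erase_add s _ hi]
    have hcomm : Commute (∑ j ∈ s', w n j) (w n i) :=
      Commute.sum_left _ _ _ fun j _ => w_comm j i
    set X := ∑ j ∈ s', w n j with hX
    have hbin : X ^ (k + 1) + (k + 1) • (X ^ k * w n i) = 0 := by
      rw [← add_pow_sq_zero hcomm (w_sq i), ← hsum, h]
    -- contract with δ_{2i+1}
    set d1 : Module.Dual ℝ (Fin (2 * n) → ℝ) := LinearMap.proj (ib n i) with hd1
    have hz1 : ∀ j ∈ s', d1 (sa n j) = 0 ∧ d1 (sb n j) = 0 := by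
      intro j hj
      have hji : j ≠ i := Finset.ne_of_mem_erase hj
      constructor
      · show sa n j (ib n i) = 0
        rw [sa_apply]
        have : ib n i ≠ ia n j := by
          simp only [Fin.ne_iff_vne, ia, ib]; omega
        simp [this]
      · show sb n j (ib n i) = 0
        rw [sb_apply]
        have : ib n i ≠ ib n j := by
          simp only [Fin.ne_iff_vne, ia, ib]
          have := Fin.val_ne_of_ne hji; omega
        simp [this]
    have step1 : ι ℝ (sa n i) * X ^ k = 0 := by
      have h0 := congrArg (C d1) hbin
      rw [map_add, map_nsmul, C_Fs_pow d1 s' hz1, map_zero, zero_add] at h0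
      rw [(hcomm.pow_left k).eq, C_w_mul, C_Fs_pow d1 s' hz1, mul_zero, add_zero] at h0
      have hda : d1 (sa n i) = 0 := by
        show sa n i (ib n i) = 0
        rw [sa_apply]
        have : ib n i ≠ ia n i := by simp only [Fin.ne_iff_vne, ia, ib]; omega
        simp [this]
      have hdb : d1 (sb n i) = 1 := by
        show sb n i (ib n i) = 1
        rw [sb_apply]; simp
      rw [hda, hdb, zero_smul, one_smul, zero_sub] at h0
      have h0' : ((k : ℝ) + 1) • (ι ℝ (sa n i) * X ^ k) = 0 := by
        have := h0
        rw [← Nat.cast_smul_eq_nsmul ℝ] at this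
        push_cast at this
        rw [smul_neg, neg_eq_zero] at this
        exact this
      have hne : ((k : ℝ) + 1) ≠ 0 := by positivity
      exact (smul_eq_zero.mp h0').resolve_left hne
    -- contract with δ_{2i}
    set d2 : Module.Dual ℝ (Fin (2 * n) → ℝ) := LinearMap.proj (ia n i) with hd2
    have hz2 : ∀ j ∈ s', d2 (sa n j) = 0 ∧ d2 (sb n j) = 0 := by
      intro j hj
      have hji : j ≠ i := Finset.ne_of_mem_erase hj
      constructor
      · show sa n j (ia n i) = 0
        rw [sa_apply]
        have : ia n i ≠ ia n j := by
          simp only [Fin.ne_iff_vne, ia, ib]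
          have := Fin.val_ne_of_ne hji; omega
        simp [this]
      · show sb n j (ia n i) = 0
        rw [sb_apply]
        have : ia n i ≠ ib n j := by
          simp only [Fin.ne_iff_vne, ia, ib]; omega
        simp [this]
    have hfinal : X ^ k = 0 := by
      have h0 := congrArg (C d2) step1
      rw [C_ι_mul, C_Fs_pow d2 s' hz2, mul_zero, sub_zero, map_zero] at h0
      have hda : d2 (sa n i) = 1 := by
        show sa n i (ia n i) = 1
        rw [sa_apply]; simp
      rw [hda, one_smul] at h0
      exact h0
    exact Fs_pow_ne_zero k s' hcard hfinal

lemma F_pow_ne_zero (k : ℕ) (hk : k ≤ n) : F n ^ k ≠ 0 := by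
  rw [F_eq]
  have := Fs_pow_ne_zero (n := n) k Finset.univ (by simpa using hk)
  simpa using this

end Contraction

end Stmt2Aux


namespace Stmt2Aux

variable {n : ℕ}

section Grading

lemma Gp_mul {m p q : ℕ} {x y : Λm m} (hx : x ∈ Gp m p) (hy : y ∈ Gp m q) :
    x * y ∈ Gp m (p + q) := by
  unfold Gp at *
  rw [pow_add]
  exact Submodule.mul_mem_mul hx hy

lemma Gp_one_mem {m : ℕ} : (1 : Λm m) ∈ Gp m 0 := by
  unfold Gp
  rw [pow_zero]
  exact Submodule.one_le.mp le_rfl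

lemma ι_mem_Gp {m : ℕ} (x : Fin m → ℝ) : ι ℝ x ∈ Gp m 1 := by
  unfold Gp
  rw [pow_one]
  exact LinearMap.mem_range_self _ _

lemma F_mem : F n ∈ Gp (2 * n) 2 :=
  Submodule.sum_mem _ fun i _ => Gp_mul (ι_mem_Gp _) (ι_mem_Gp _)

lemma listprod_Gp {m : ℕ} : ∀ l : List (Λm m), (∀ x ∈ l, x ∈ Gp m 1) →
    l.prod ∈ Gp m l.length
  | [], _ => Gp_one_mem
  | a :: t, h => by
    rw [List.prod_cons, List.length_cons]
    have := Gp_mul (h a (by simp)) (listprod_Gp t fun x hx => h x (by simp [hx]))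
    simpa [Nat.add_comm] using this

lemma ΩTerm_mem (S : Finset (Fin n)) : ΩTerm n S ∈ Gp (2 * n) n := by
  have h := listprod_Gp (List.ofFn fun i : Fin n =>
    if i ∈ S then e (2 * n) ⟨2 * i.1 + 1, by have := i.2; omega⟩
    else e (2 * n) ⟨2 * i.1, by have := i.2; omega⟩) ?_
  · simpa [ΩTerm] using h
  · intro x hx
    rw [List.mem_ofFn] at hx
    obtain ⟨i, rfl⟩ := hx
    split <;> exact ι_mem_Gp _

lemma Ωp_mem : Ωp n ∈ Gp (2 * n) n :=
  Submodule.sum_mem _ fun S _ => Submodule.smul_mem _ _ (ΩTerm_mem S)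

lemma Ωm_mem : Ωm n ∈ Gp (2 * n) n :=
  Submodule.sum_mem _ fun S _ => Submodule.smul_mem _ _ (ΩTerm_mem S)

end Grading

section Words

lemma closure_struct {x : Λm (2 * n)} (hx : x ∈ Submonoid.closure {F n, Ωp n, Ωm n}) :
    ∃ a k : ℕ, x ∈ Gp (2 * n) (2 * a + n * k) ∧ (k = 0 → x = F n ^ a) := by
  induction hx using Submonoid.closure_induction with
  | mem x hx =>
    rcases hx with rfl | rfl | rfl
    · exact ⟨1, 0, by simpa using F_mem, fun _ => (pow_one _).symm⟩
    · exact ⟨0, 1, by simpa using Ωp_mem, fun h => absurd h one_ne_zero⟩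
    · exact ⟨0, 1, by simpa using Ωm_mem, fun h => absurd h one_ne_zero⟩
  | one => exact ⟨0, 0, by simpa using Gp_one_mem, fun _ => (pow_zero _).symm⟩
  | mul x y hx hy ihx ihy =>
    obtain ⟨a, k, hxm, hxe⟩ := ihx
    obtain ⟨a', k', hym, hye⟩ := ihy
    refine ⟨a + a', k + k', ?_, ?_⟩
    · rw [show 2 * (a + a') + n * (k + k') = (2 * a + n * k) + (2 * a' + n * k') by ring]
      exact Gp_mul hxm hym
    · intro h
      rw [hxe (by omega), hye (by omega), pow_add]

end Words

end Stmt2Aux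

namespace Stmt2Aux

variable {n : ℕ}

abbrev 𝒜 (m : ℕ) : ℕ → Submodule ℝ (Λm m) := fun p => ⋀[ℝ]^p (Fin m → ℝ)

lemma Gp_eq_𝒜 (m p : ℕ) : Gp m p = 𝒜 m p := rfl

lemma adjoin_proj {P : Submodule ℝ (Λm (2 * n))} {d : ℕ}
    (hword : ∀ x ∈ Submonoid.closure {F n, Ωp n, Ωm n},
      ((DirectSum.decompose (𝒜 (2 * n)) x d : 𝒜 (2 * n) d) : Λm (2 * n)) ∈ P) :
    ∀ x ∈ Algebra.adjoin ℝ {F n, Ωp n, Ωm n},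
      ((DirectSum.decompose (𝒜 (2 * n)) x d : 𝒜 (2 * n) d) : Λm (2 * n)) ∈ P := by
  intro x hx
  rw [← Subalgebra.mem_toSubmodule, Algebra.adjoin_eq_span] at hx
  induction hx using Submodule.span_induction with
  | mem y hy => exact hword y hy
  | zero => simpa using P.zero_mem
  | add y z _ _ ihy ihz =>
    rw [DirectSum.decompose_add]
    simpa using P.add_mem ihy ihz
  | smul r y _ ihy =>
    rw [DirectSum.decompose_smul]
    simpa [DirectSum.smul_apply] using P.smul_mem r ihy

lemma proj3_zero (hn : 2 ≤ n) (hn3 : n ≠ 3) :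
    ∀ x ∈ Algebra.adjoin ℝ {F n, Ωp n, Ωm n},
      ((DirectSum.decompose (𝒜 (2 * n)) x 3 : 𝒜 (2 * n) 3) : Λm (2 * n)) = 0 := by
  intro x hx
  have h := adjoin_proj (P := ⊥) (d := 3) ?_ x hx
  · simpa using h
  · intro y hy
    obtain ⟨a, k, hym, -⟩ := closure_struct hy
    have hne : 2 * a + n * k ≠ 3 := by
      intro he
      rcases Nat.eq_zero_or_pos k with hk | hk
      · subst hk; simp at he; omega
      · have h1 : n ≤ n * k := Nat.le_mul_of_pos_right n hk
        have h2 : n * k ≤ 3 := le_trans (Nat.le_add_left _ _) (le_of_eq he)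
        have h3 : n ≤ 3 := le_trans h1 h2
        have hn2 : n = 2 := by omega
        subst hn2
        omega
    rw [Gp_eq_𝒜] at hym
    rw [DirectSum.decompose_of_mem_ne (𝒜 (2 * n)) hym hne]
    simp

lemma projn1 (hn : 2 ≤ n) :
    ∀ x ∈ Algebra.adjoin ℝ {F n, Ωp n, Ωm n},
      ((DirectSum.decompose (𝒜 (2 * n)) x (n + 1) : 𝒜 (2 * n) (n + 1)) : Λm (2 * n)) ∈
        Submodule.span ℝ {F n ^ ((n + 1) / 2)} := by
  refine adjoin_proj ?_
  intro y hy
  obtain ⟨a, k, hym, hye⟩ := closure_struct hy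
  by_cases he : 2 * a + n * k = n + 1
  · have hk : k = 0 := by
      rcases k with _ | _ | k
      · rfl
      · exfalso; omega
      · exfalso
        have h1 : n * 2 ≤ n * (k + 2) := Nat.mul_le_mul_left n (by omega)
        have h2 : n * (k + 2) ≤ n + 1 := le_trans (Nat.le_add_left _ _) (le_of_eq he)
        have h3 : n * 2 ≤ n + 1 := le_trans h1 h2
        omega
    subst hk
    have ha : a = (n + 1) / 2 := by omega
    rw [he, Gp_eq_𝒜] at hym
    rw [DirectSum.decompose_of_mem_same (𝒜 (2 * n)) hym, hye rfl, ha]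
    exact Submodule.mem_span_singleton_self _
  · rw [DirectSum.decompose_of_mem_ne (𝒜 (2 * n)) ((Gp_eq_𝒜 _ _) ▸ hym) he]
    simp

end Stmt2Aux

namespace Stmt2Aux

variable {n : ℕ}

def Ωvec (n : ℕ) (S : Finset (Fin n)) : Fin n → (Fin (2 * n) → ℝ) := fun i =>
  if i ∈ S then sb n i else sa n i

lemma ΩTerm_eq (S : Finset (Fin n)) : ΩTerm n S = ιMulti ℝ n (Ωvec n S) := by
  rw [ιMulti_apply]
  unfold ΩTerm
  refine congrArg _ (congrArg _ (funext fun i => ?_))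
  unfold Ωvec
  split <;> rfl

lemma ΩTerm_mul_w (S : Finset (Fin n)) (j : Fin n) : ΩTerm n S * w n j = 0 := by
  have happ : (fun t => ι ℝ (Fin.append (Ωvec n S) ![sa n j, sb n j] t))
      = Fin.append (fun s => ι ℝ (Ωvec n S s)) (fun s => ι ℝ (![sa n j, sb n j] s)) := by
    funext t
    induction t using Fin.addCases with
    | left t => rw [Fin.append_left, Fin.append_left]
    | right t => rw [Fin.append_right, Fin.append_right]
  have key : ΩTerm n S * w n j =
      ιMulti ℝ (n + 2) (Fin.append (Ωvec n S) ![sa n j, sb n j]) := by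
    rw [ιMulti_apply]
    show _ = (List.ofFn fun t => ι ℝ (Fin.append (Ωvec n S) ![sa n j, sb n j] t)).prod
    rw [happ, List.ofFn_fin_append, List.prod_append]
    congr 1
    · rw [ΩTerm_eq, ιMulti_apply]
    · show w n j = _
      simp only [List.ofFn_succ, List.ofFn_zero, Matrix.cons_val_zero, Matrix.cons_val_one,
        Matrix.head_cons, List.prod_cons, List.prod_nil, mul_one, Fin.succ_zero_eq_one]
      rfl
  rw [key]
  by_cases hj : j ∈ S
  · refine AlternatingMap.map_eq_zero_of_eq _ _
      (i := Fin.castAdd 2 j) (j := Fin.natAdd n 1) ?_ ?_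
    · rw [Fin.append_left, Fin.append_right]
      unfold Ωvec
      rw [if_pos hj]
      simp
    · intro hcontra
      have := congrArg Fin.val hcontra
      simp only [Fin.coe_castAdd, Fin.coe_natAdd] at this
      omega
  · refine AlternatingMap.map_eq_zero_of_eq _ _
      (i := Fin.castAdd 2 j) (j := Fin.natAdd n 0) ?_ ?_
    · rw [Fin.append_left, Fin.append_right]
      unfold Ωvec
      rw [if_neg hj]
      simp
    · intro hcontra
      have := congrArg Fin.val hcontra
      simp only [Fin.coe_castAdd, Fin.coe_natAdd] at this
      omega

lemma Ωp_mul_F : Ωp n * F n = 0 := by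
  rw [F_eq]
  unfold Ωp
  rw [Finset.sum_mul]
  refine Finset.sum_eq_zero fun S _ => ?_
  rw [smul_mul_assoc, Finset.mul_sum, Finset.sum_eq_zero fun j _ => ΩTerm_mul_w S j, smul_zero]

lemma Ωm_mul_F : Ωm n * F n = 0 := by
  rw [F_eq]
  unfold Ωm
  rw [Finset.sum_mul]
  refine Finset.sum_eq_zero fun S _ => ?_
  rw [smul_mul_assoc, Finset.mul_sum, Finset.sum_eq_zero fun j _ => ΩTerm_mul_w S j, smul_zero]

end Stmt2Aux

theorem stmt2 (n : ℕ) (hn : 2 ≤ n) (hn3 : n ≠ 3)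
    (f : Λm (2 * n) →ₗ[ℝ] Λm (2 * n))
    (hmem : ∀ x ∈ Algebra.adjoin ℝ {F n, Ωp n, Ωm n},
      f x ∈ Algebra.adjoin ℝ {F n, Ωp n, Ωm n})
    (hdeg : ∀ (p : ℕ), ∀ x ∈ Algebra.adjoin ℝ {F n, Ωp n, Ωm n},
      x ∈ Gp (2 * n) p → f x ∈ Gp (2 * n) (p + 1))
    (hLeib : ∀ (p : ℕ) (x y : Λm (2 * n)),
      x ∈ Algebra.adjoin ℝ {F n, Ωp n, Ωm n} →
      y ∈ Algebra.adjoin ℝ {F n, Ωp n, Ωm n} →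
      x ∈ Gp (2 * n) p →
      f (x * y) = f x * y + ((-1 : ℝ) ^ p) • (x * f y))
    (hsq : ∀ x ∈ Algebra.adjoin ℝ {F n, Ωp n, Ωm n}, f (f x) = 0) :
    ∀ x ∈ Algebra.adjoin ℝ {F n, Ωp n, Ωm n}, f x = 0 := by
  classical
  have hFA : F n ∈ Algebra.adjoin ℝ {F n, Ωp n, Ωm n} := Algebra.subset_adjoin (by simp)
  have hΩpA : Ωp n ∈ Algebra.adjoin ℝ {F n, Ωp n, Ωm n} := Algebra.subset_adjoin (by simp)
  have hΩmA : Ωm n ∈ Algebra.adjoin ℝ {F n, Ωp n, Ωm n} := Algebra.subset_adjoin (by simp)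
  have hfF : f (F n) = 0 := by
    have h1 : f (F n) ∈ Gp (2 * n) 3 := hdeg 2 _ hFA Stmt2Aux.F_mem
    have h2 := Stmt2Aux.proj3_zero hn hn3 _ (hmem _ hFA)
    rw [Stmt2Aux.Gp_eq_𝒜] at h1
    rwa [DirectSum.decompose_of_mem_same _ h1] at h2
  have hΩgen : ∀ Ω : Λm (2 * n), Ω ∈ Algebra.adjoin ℝ {F n, Ωp n, Ωm n} →
      Ω ∈ Gp (2 * n) n → Ω * F n = 0 → f Ω = 0 := by
    intro Ω hΩA hΩd hΩF
    have h1 : f Ω ∈ Gp (2 * n) (n + 1) := hdeg n _ hΩA hΩd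
    have h2 := Stmt2Aux.projn1 hn _ (hmem _ hΩA)
    rw [Stmt2Aux.Gp_eq_𝒜] at h1
    rw [DirectSum.decompose_of_mem_same _ h1] at h2
    obtain ⟨c, hc⟩ := Submodule.mem_span_singleton.mp h2
    have hL := hLeib n Ω (F n) hΩA hFA hΩd
    rw [hΩF, map_zero, hfF, mul_zero, smul_zero, add_zero] at hL
    have h3 : c • F n ^ ((n + 1) / 2 + 1) = 0 := by
      rw [pow_succ, ← smul_mul_assoc, hc]
      exact hL.symm
    have h4 : F n ^ ((n + 1) / 2 + 1) ≠ 0 := Stmt2Aux.F_pow_ne_zero _ (by omega)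
    have hc0 : c = 0 := (smul_eq_zero.mp h3).resolve_right h4
    rw [← hc, hc0, zero_smul]
  have hfΩp : f (Ωp n) = 0 := hΩgen _ hΩpA Stmt2Aux.Ωp_mem Stmt2Aux.Ωp_mul_F
  have hfΩm : f (Ωm n) = 0 := hΩgen _ hΩmA Stmt2Aux.Ωm_mem Stmt2Aux.Ωm_mul_F
  have hf1 : f 1 = 0 := by
    have h := hLeib 0 1 1 (one_mem _) (one_mem _) Stmt2Aux.Gp_one_mem
    simp only [one_mul, mul_one, pow_zero, one_smul] at h
    exact add_eq_left.mp h.symm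
  have key : ∀ x ∈ Submonoid.closure {F n, Ωp n, Ωm n},
      f x = 0 ∧ x ∈ Algebra.adjoin ℝ {F n, Ωp n, Ωm n} ∧ ∃ p, x ∈ Gp (2 * n) p := by
    intro x hx
    induction hx using Submonoid.closure_induction with
    | mem y hy =>
      rcases hy with rfl | rfl | rfl
      · exact ⟨hfF, hFA, 2, Stmt2Aux.F_mem⟩
      · exact ⟨hfΩp, hΩpA, n, Stmt2Aux.Ωp_mem⟩
      · exact ⟨hfΩm, hΩmA, n, Stmt2Aux.Ωm_mem⟩
    | one => exact ⟨hf1, one_mem _, 0, Stmt2Aux.Gp_one_mem⟩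
    | mul x y hx hy ihx ihy =>
      obtain ⟨hfx, hxA, p, hxp⟩ := ihx
      obtain ⟨hfy, hyA, q, hyq⟩ := ihy
      refine ⟨?_, mul_mem hxA hyA, p + q, Stmt2Aux.Gp_mul hxp hyq⟩
      rw [hLeib p x y hxA hyA hxp, hfx, hfy, zero_mul, mul_zero, smul_zero, add_zero]
  intro x hx
  rw [← Subalgebra.mem_toSubmodule, Algebra.adjoin_eq_span] at hx
  induction hx using Submodule.span_induction with
  | mem y hy => exact (key y hy).1
  | zero => exact map_zero f
  | add y z _ _ ihy ihz => rw [map_add, ihy, ihz, add_zero]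
  | smul r y _ ihy => rw [map_smul, ihy, smul_zero]
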